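/- arXiv:2308.02684 — 9 statements merged into one kernel-verified Lean document; each statement's English description precedes it below -/
import Mathlib

section
/- (Hummer principle) Let n ≥ 1 and consider a deck of 2n cards. For every configuration c of the 2n-card deck reachable from the all-face-down initial configuration c₀ by CATO shuffles, the number of even positions p with (c p).2 = true equals the number of odd positions p with (c p).2 = true; that is, the cardinality of {p : Fin (2n) | p.val % 2 = 0 ∧ (c p).2 = true} equals the cardinality of {p : Fin (2n) | p.val % 2 = 1 ∧ (c p).2 = true}. -/
/-! Let `T c = ∑ₚ ε(c p) (-1)^p`, where `ε = 1` for a face-up card and `-1` for a face-down one.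
`T c₀ = 0` since the deck has even length. The cut moves every card one position, which for an
even-length deck changes the parity of every position, so it negates `T`. An even flip `δ_k` moves
the card at `p < k` to `k - 1 - p`, of opposite parity, and turns it over, so it fixes `T`.
Hence `T` vanishes on every reachable configuration, and `T c` is twice the number of face-up
cards at even positions minus twice the number at odd positions. -/

/-- A configuration of an `n`-card deck: position `p` holds the card that originally
occupied position `(c p).1`, and it is face-up iff `(c p).2 = true`. -/
abbrev Deck (n : ℕ) : Type := Fin n → Fin n × Bool

/-- The all-face-down initial configuration `c₀`. -/
def initial {n : ℕ} : Deck n := fun p => (p, false)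

/-- The cut `α`: sends `c` to `p ↦ c ((p + 1) % n)`. -/
def cut {n : ℕ} (c : Deck n) : Deck n :=
  fun p => c ⟨(p.val + 1) % n, Nat.mod_lt _ (Nat.lt_of_le_of_lt (Nat.zero_le _) p.isLt)⟩

/-- The inverse cut `α⁻¹`: sends `c` to `p ↦ c ((p + n - 1) % n)`. -/
def invCut {n : ℕ} (c : Deck n) : Deck n :=
  fun p => c ⟨(p.val + n - 1) % n, Nat.mod_lt _ (Nat.lt_of_le_of_lt (Nat.zero_le _) p.isLt)⟩

/-- The flip `δ_k` (and also `τ_m` for odd `m`): turn over the top `k` cards as a single card.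
For `0 < k ≤ n` it agrees with `c` at positions `p ≥ k`, and at `p < k` its value is
`(q, !b)` where `(q, b) = c (k - 1 - p)`. -/
def flipTop {n : ℕ} (k : ℕ) (c : Deck n) : Deck n := fun p =>
  if h : p.val < k ∧ k ≤ n then
    ((c ⟨k - 1 - p.val, by omega⟩).1, !(c ⟨k - 1 - p.val, by omega⟩).2)
  else c p

/-- The deal `γ_j`: its value at `p < n - j` is `c (p + j)`, and at `p ≥ n - j` is
`c (n - 1 - p)`. -/
def deal {n : ℕ} (j : ℕ) (c : Deck n) : Deck n := fun p =>
  if h : p.val < n - j then c ⟨p.val + j, by omega⟩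
  else c ⟨n - 1 - p.val, by have := p.isLt; omega⟩

/-- The move `ω_l`: its value at `p < n - l - 1` is `c (p + l + 1)`, at `p = n - l - 1`
is `c l`, and at `p ≥ n - l` is `c (p - (n - l))`. -/
def omegaMove {n : ℕ} (l : ℕ) (c : Deck n) : Deck n := fun p =>
  if hl : l < n then
    if _h1 : p.val < n - l - 1 then c ⟨p.val + l + 1, by omega⟩
    else if _h2 : p.val = n - l - 1 then c ⟨l, hl⟩
    else c ⟨p.val - (n - l), by have := p.isLt; omega⟩
  else c p

/-- `Reachable X c c'` : `c'` is obtained from `c` by finitely many successive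
applications of maps in `X`. -/
def Reachable {n : ℕ} (X : Set (Deck n → Deck n)) (c c' : Deck n) : Prop :=
  Relation.ReflTransGen (fun a b => ∃ f ∈ X, b = f a) c c'

/-- The CATO shuffles on a deck of `2 * n` cards: the cut `α` together with the
flips `δ_k` for even `k` with `0 < k ≤ 2 * n`. -/
def CATO (n : ℕ) : Set (Deck (2 * n) → Deck (2 * n)) :=
  {cut} ∪ {f | ∃ k, Even k ∧ 0 < k ∧ k ≤ 2 * n ∧ f = flipTop k}

lemma neg_one_pow_mod_of_even {n : ℕ} (hn : Even n) (a : ℕ) :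
    (-1 : ℤ) ^ (a % n) = (-1) ^ a := by
  rw [neg_one_pow_eq_pow_mod_two, Nat.mod_mod_of_dvd _ (even_iff_two_dvd.1 hn),
    ← neg_one_pow_eq_pow_mod_two]

lemma neg_one_pow_reflect {k p : ℕ} (hk : Even k) (hp : p < k) :
    (-1 : ℤ) ^ (k - 1 - p) = -(-1) ^ p := by
  obtain ⟨m, rfl⟩ := hk
  rw [neg_one_pow_eq_pow_mod_two, neg_one_pow_eq_pow_mod_two (R := ℤ) p]
  rcases Nat.mod_two_eq_zero_or_one p with h | h
  · rw [h, show (m + m - 1 - p) % 2 = 1 by omega]; norm_num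
  · rw [h, show (m + m - 1 - p) % 2 = 0 by omega]; norm_num

lemma sum_neg_one_pow_fin_of_even {n : ℕ} (hn : Even n) :
    ∑ p : Fin n, (-1 : ℤ) ^ (p : ℕ) = 0 := by
  rw [Fin.sum_univ_eq_sum_range (fun i => (-1 : ℤ) ^ i), neg_one_geom_sum, if_pos hn]

lemma cut_apply {n : ℕ} [NeZero n] (c : Deck n) (p : Fin n) : cut c p = c (p + 1) := by
  simp only [cut]
  congr 1
  ext
  simp [Fin.val_add]

def alternatingFaceSum {n : ℕ} (c : Deck n) : ℤ :=
  ∑ p : Fin n, (if (c p).2 then 1 else -1) * (-1) ^ (p : ℕ)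

lemma alternatingFaceSum_initial {n : ℕ} (hn : Even n) :
    alternatingFaceSum (initial : Deck n) = 0 := by
  simp [alternatingFaceSum, initial, sum_neg_one_pow_fin_of_even hn]

lemma alternatingFaceSum_cut {n : ℕ} (hn : Even n) (c : Deck n) :
    alternatingFaceSum (cut c) = -alternatingFaceSum c := by
  obtain rfl | hpos := n.eq_zero_or_pos
  · simp [alternatingFaceSum]
  have : NeZero n := ⟨hpos.ne'⟩
  rw [alternatingFaceSum, alternatingFaceSum, ← Finset.sum_neg_distrib]
  refine Fintype.sum_equiv (Equiv.addRight 1) _ _ fun p => ?_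
  rw [cut_apply, Equiv.coe_addRight, Fin.val_add, Fin.val_one', Nat.add_mod_mod,
    neg_one_pow_mod_of_even hn, pow_succ]
  ring

lemma alternatingFaceSum_flipTop {n k : ℕ} (hk : Even k) (hkn : k ≤ n) (c : Deck n) :
    alternatingFaceSum (flipTop k c) = alternatingFaceSum c := by
  let reflect : Fin n → Fin n := fun p => if h : p < k then ⟨k - 1 - p, by omega⟩ else p
  have hreflect : Function.Involutive reflect := by
    intro p
    by_cases hp : (p : ℕ) < k
    · ext
      simp only [reflect, hp, dif_pos, show k - 1 - (p : ℕ) < k by omega]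
      omega
    · simp only [reflect, hp, dif_neg, not_false_eq_true]
  refine Fintype.sum_bijective reflect hreflect.bijective _ _ fun p => ?_
  by_cases hp : (p : ℕ) < k
  · simp only [flipTop, reflect, hp, hkn, and_self, dif_pos, neg_one_pow_reflect hk hp]
    cases (c ⟨k - 1 - p, by omega⟩).2 <;> simp
  · simp [flipTop, reflect, hp]

lemma alternatingFaceSum_eq_zero_of_reachable {n : ℕ} {c : Deck (2 * n)}
    (hreach : Reachable (CATO n) initial c) : alternatingFaceSum c = 0 := by
  induction hreach with
  | refl => exact alternatingFaceSum_initial (even_two_mul n)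
  | tail _ hstep ih =>
    obtain ⟨f, hf | ⟨k, hk, -, hkn, rfl⟩, rfl⟩ := hstep
    · rw [Set.mem_singleton_iff.1 hf, alternatingFaceSum_cut (even_two_mul n), ih, neg_zero]
    · rw [alternatingFaceSum_flipTop hk hkn, ih]

lemma alternatingFaceSum_eq {n : ℕ} (c : Deck n) :
    alternatingFaceSum c =
      2 * ((Finset.univ.filter fun p : Fin n => p.val % 2 = 0 ∧ (c p).2 = true).card : ℤ) -
        2 * ((Finset.univ.filter fun p : Fin n => p.val % 2 = 1 ∧ (c p).2 = true).card : ℤ) -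
        ∑ p : Fin n, (-1 : ℤ) ^ (p : ℕ) := by
  rw [← Finset.sum_boole, ← Finset.sum_boole, Finset.mul_sum, Finset.mul_sum,
    ← Finset.sum_sub_distrib, ← Finset.sum_sub_distrib]
  refine Finset.sum_congr rfl fun p _ => ?_
  rw [neg_one_pow_eq_pow_mod_two]
  rcases Nat.mod_two_eq_zero_or_one p with hp | hp <;> cases (c p).2 <;> simp [hp]

theorem hummer_principle_general (n : ℕ) (c : Deck (2 * n))
    (hreach : Reachable (CATO n) initial c) :
    (Finset.univ.filter fun p : Fin (2 * n) => p.val % 2 = 0 ∧ (c p).2 = true).card =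
      (Finset.univ.filter fun p : Fin (2 * n) => p.val % 2 = 1 ∧ (c p).2 = true).card := by
  have h := alternatingFaceSum_eq c
  rw [alternatingFaceSum_eq_zero_of_reachable hreach,
    sum_neg_one_pow_fin_of_even (even_two_mul n)] at h
  omega

/-- **Hummer principle.** For a deck of `2n` cards, all initially face down, after any
number of CATO shuffles the number of face-up cards in even positions equals the number
of face-up cards in odd positions. -/
theorem hummer_principle (n : ℕ) (hn : 1 ≤ n) (c : Deck (2 * n))
    (hreach : Reachable (CATO n) initial c) :
    (Finset.univ.filter fun p : Fin (2 * n) => p.val % 2 = 0 ∧ (c p).2 = true).card =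
      (Finset.univ.filter fun p : Fin (2 * n) => p.val % 2 = 1 ∧ (c p).2 = true).card :=
  hummer_principle_general n c hreach
end

section
/- Let n ≥ 2 and let k be odd with 3 ≤ k ≤ 2n. For every configuration c of a 2n-card deck, applying to c successively (leftmost letter applied first) the moves of the word β (αβ)^{k−2} α^{−(k−2)} · β (αβ)^{k−3} α^{−(k−3)} · ⋯ · β (αβ) α^{−1} · β yields the configuration c′ that reverses the order of the top k cards without changing any orientation: c′ p = c (k − 1 − p) for p < k and c′ p = c p for p ≥ k. -/
/-- The block `β (αβ)^i α^{-i}` applied to a configuration (leftmost letter first):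
first `β = δ₂`, then `i` times (`α` then `β`), then `i` times `α⁻¹`. -/
def block {n : ℕ} (i : ℕ) (c : Deck n) : Deck n :=
  invCut^[i] ((fun d => flipTop 2 (cut d))^[i] (flipTop 2 c))

/-- Apply, leftmost first, the blocks `β (αβ)^i α^{-i}` for `i = m, m - 1, …, 1`. -/
def blocks {n : ℕ} : ℕ → Deck n → Deck n
  | 0, c => c
  | i + 1, c => blocks i (block (i + 1) c)

namespace Deck

open Fin.NatCast

variable {N : ℕ}

def turn (x : Fin N × Bool) : Fin N × Bool := (x.1, !x.2)

lemma turn_involutive : Function.Involutive (turn (N := N)) := fun x => by simp [turn]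

def swapFlip (a b : Fin N) (c : Deck N) : Deck N := fun p =>
  if p = a then turn (c b) else if p = b then turn (c a) else c p

def sinkTop [NeZero N] (i : ℕ) (c : Deck N) : Deck N := fun p =>
  if p.val ≤ i then turn (c (p + 1)) else if p.val = i + 1 then turn^[i + 1] (c 0) else c p

lemma val_one_of_two_le [NeZero N] (hN : 2 ≤ N) : (1 : Fin N).val = 1 := by
  rw [Fin.val_one', Nat.mod_eq_of_lt hN]

lemma cut_iterate [NeZero N] (j : ℕ) (c : Deck N) :
    cut^[j] c = fun p => c (p + (j : Fin N)) := by
  induction j generalizing c with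
  | zero => simp
  | succ j ih =>
    funext p
    rw [Function.iterate_succ_apply, ih]
    refine congrArg c (Fin.ext ?_)
    simp [Fin.val_add, Nat.mod_add_mod, add_assoc]

lemma invCut_cut (c : Deck N) : invCut (cut c) = c := by
  funext p
  refine congrArg c (Fin.ext ?_)
  change ((p + N - 1) % N + 1) % N = p
  rw [Nat.mod_add_mod, Nat.sub_add_cancel (by omega), Nat.add_mod_right, Nat.mod_eq_of_lt p.isLt]

lemma flipTop_two_eq_swapFlip [NeZero N] (hN : 2 ≤ N) (c : Deck N) :
    flipTop 2 c = swapFlip 0 1 c := by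
  funext p
  simp only [flipTop, swapFlip, Fin.ext_iff, Fin.val_zero, val_one_of_two_le hN]
  split_ifs <;> first
    | omega
    | rfl
    | exact congrArg turn (congrArg c (Fin.ext (by
        simp only [val_one_of_two_le hN, Fin.val_zero]; omega)))

lemma flipTop_two_cut_iterate [NeZero N] (hN : 2 ≤ N) (j : ℕ) (c : Deck N) :
    flipTop 2 (cut^[j] c) = cut^[j] (swapFlip (j : Fin N) ((j : Fin N) + 1) c) := by
  rw [flipTop_two_eq_swapFlip hN, cut_iterate, cut_iterate]
  funext p
  simp [swapFlip, add_comm _ (j : Fin N)]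

lemma swapFlip_zero_one [NeZero N] (hN : 2 ≤ N) (c : Deck N) :
    swapFlip 0 1 c = sinkTop 0 c := by
  funext p
  simp only [swapFlip, sinkTop, Fin.ext_iff, Fin.val_zero, val_one_of_two_le hN]
  split_ifs <;> first
    | omega
    | rfl
    | exact congrArg turn (congrArg c (Fin.ext (by
        rw [Fin.val_add_one_of_lt' (i := p) (by omega), val_one_of_two_le hN]; omega)))

lemma swapFlip_sinkTop [NeZero N] {i : ℕ} (hi : i + 3 ≤ N) (c : Deck N) :
    swapFlip ((i + 1 : ℕ) : Fin N) ((i + 1 : ℕ) + 1) (sinkTop i c) = sinkTop (i + 1) c := by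
  have ha : ((i + 1 : ℕ) : Fin N).val = i + 1 := Fin.val_cast_of_lt (by omega)
  have hb : (((i + 1 : ℕ) : Fin N) + 1).val = i + 2 := by
    rw [Fin.val_add_one_of_lt' (by omega), ha]
  funext p
  simp only [swapFlip, sinkTop, Fin.ext_iff, ha, hb]
  split_ifs <;> first
    | omega
    | rfl
    | exact congrArg turn (congrArg c (Fin.ext (by
        rw [Fin.val_add_one_of_lt' (i := p) (by omega)]; omega)))
    | exact (Function.iterate_succ_apply' turn _ _).symm

lemma iterate_flipTop_two_cut [NeZero N] {i : ℕ} (hi : i + 2 ≤ N) (c : Deck N) :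
    (fun d => flipTop 2 (cut d))^[i] (flipTop 2 c) = cut^[i] (sinkTop i c) := by
  induction i with
  | zero => exact (flipTop_two_eq_swapFlip hi c).trans (swapFlip_zero_one hi c)
  | succ i ih =>
    rw [Function.iterate_succ_apply', ih (by omega), ← Function.iterate_succ_apply' cut,
      flipTop_two_cut_iterate (by omega), swapFlip_sinkTop hi]

lemma block_eq_sinkTop [NeZero N] {i : ℕ} (hi : i + 2 ≤ N) (c : Deck N) :
    block i c = sinkTop i c := by
  rw [block, iterate_flipTop_two_cut hi]
  exact Function.LeftInverse.iterate invCut_cut i _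

lemma flipTop_two_blocks {m : ℕ} (hm : m + 2 ≤ N) (c : Deck N) (p : Fin N) :
    flipTop 2 (blocks m c) p =
      if h : p.val < m + 2 then turn^[m + 1] (c ⟨m + 1 - p.val, by omega⟩) else c p := by
  induction m generalizing c with
  | zero =>
    simp only [blocks, flipTop]
    split_ifs <;> first | omega | rfl
  | succ m ih =>
    have : NeZero N := ⟨by omega⟩
    rw [blocks, ih (by omega), block_eq_sinkTop hm]
    rcases lt_trichotomy p.val (m + 2) with hp | hp | hp
    · have hq : m + 1 - p.val + 1 < N := by omega
      rw [dif_pos hp, dif_pos (by omega), sinkTop, if_pos (by simp only; omega),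
        ← Function.iterate_succ_apply]
      refine congrArg _ (congrArg c (Fin.ext ?_))
      rw [Fin.val_add_one_of_lt' hq]
      simp only
      omega
    · rw [dif_neg (by omega), dif_pos (by omega), sinkTop, if_neg (by omega), if_pos hp]
      exact congrArg _ (congrArg c (Fin.ext (by simp only [Fin.val_zero]; omega)))
    · rw [dif_neg (by omega), dif_neg (by omega), sinkTop, if_neg (by omega), if_neg (by omega)]

end Deck

/-- For odd `k` with `3 ≤ k ≤ 2n`, applying to `c` the word
`β (αβ)^{k-2} α^{-(k-2)} ⋯ β (αβ) α^{-1} β` (leftmost letter first) yields the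
configuration that reverses the order of the top `k` cards without changing any
orientation. -/
theorem word_reverses_top_k_odd (n : ℕ) (k : ℕ) (hko : Odd k)
    (hk3 : 3 ≤ k) (hkn : k ≤ 2 * n) (c : Deck (2 * n)) :
    ∀ p : Fin (2 * n),
      (∀ h : p.val < k,
        flipTop 2 (blocks (k - 2) c) p = c ⟨k - 1 - p.val, by omega⟩) ∧
      (k ≤ p.val → flipTop 2 (blocks (k - 2) c) p = c p) := by
  intro p
  have hm : k - 2 + 2 ≤ 2 * n := by omega
  have hturn : (Deck.turn (N := 2 * n))^[k - 2 + 1] = id := by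
    obtain ⟨j, rfl⟩ := hko
    exact Deck.turn_involutive.iterate_even ⟨j, by omega⟩
  refine ⟨fun h => ?_, fun h => ?_⟩
  · rw [Deck.flipTop_two_blocks hm, dif_pos (by omega), hturn]
    exact congrArg c (Fin.ext (by simp only; omega))
  · rw [Deck.flipTop_two_blocks hm, dif_neg (by omega)]
end

section
/- Let n ≥ 1. On configurations of a 2n-card deck, the submonoid (under composition) of bijections of the set of configurations generated by {α, β} equals the submonoid generated by {α} ∪ {δ_k : k even, 2 ≤ k ≤ 2n}; that is, every finite composition of cuts and even flips can be realized as a finite composition of α and β, and conversely. -/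
/-!
Since `β = δ₂` is itself an even flip, only the other inclusion needs an argument. The cut
has order `2n`, so `α⁻¹ = α^(2n-1)` lies in the monoid generated by `α` and `β`, and the
identity `δ_{k+2} = α⁻¹ β α β α⁻¹ β α⁻¹ δ_k α δ_k α δ_k`, checked position by position,
produces every even flip from `β` by induction on `k`.
-/

variable {N : ℕ}

theorem cut_apply_of_succ_lt (c : Deck N) {p : ℕ} (hp : p < N) (h : p + 1 < N) :
    cut c ⟨p, hp⟩ = c ⟨p + 1, h⟩ := by
  simp only [cut, Nat.mod_eq_of_lt h]

theorem cut_apply_of_succ_eq (c : Deck N) {p : ℕ} (hp : p < N) (h : p + 1 = N) :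
    cut c ⟨p, hp⟩ = c ⟨0, by omega⟩ := by
  simp only [cut, h, Nat.mod_self]

theorem invCut_apply_of_pos (c : Deck N) {p : ℕ} (hp : p < N) (h : 0 < p) :
    invCut c ⟨p, hp⟩ = c ⟨p - 1, by omega⟩ := by
  simp only [invCut, show p + N - 1 = p - 1 + N by omega, Nat.add_mod_right,
    Nat.mod_eq_of_lt (show p - 1 < N by omega)]

theorem invCut_apply_of_eq_zero (c : Deck N) {p : ℕ} (hp : p < N) (h : p = 0) :
    invCut c ⟨p, hp⟩ = c ⟨N - 1, by omega⟩ := by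
  simp only [invCut, h, Nat.zero_add, Nat.mod_eq_of_lt (show N - 1 < N by omega)]

theorem flipTop_apply_of_lt {k : ℕ} (c : Deck N) {p : ℕ} (hp : p < N) (h : p < k)
    (hk : k ≤ N) :
    flipTop k c ⟨p, hp⟩ = ((c ⟨k - 1 - p, by omega⟩).1, !(c ⟨k - 1 - p, by omega⟩).2) :=
  dif_pos ⟨h, hk⟩

theorem flipTop_apply_of_le {k : ℕ} (c : Deck N) {p : ℕ} (hp : p < N) (h : k ≤ p) :
    flipTop k c ⟨p, hp⟩ = c ⟨p, hp⟩ :=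
  dif_neg fun h' => absurd h'.1 (Nat.not_lt.mpr h)

theorem flipTop_zero : (flipTop 0 : Deck N → Deck N) = id :=
  funext fun c => funext fun ⟨_, hp⟩ => flipTop_apply_of_le c hp (Nat.zero_le _)

theorem flipTop_add_two {k : ℕ} (hk : 2 ≤ k) (hkN : k + 2 ≤ N) :
    (flipTop (k + 2) : Deck N → Deck N) = invCut ∘ flipTop 2 ∘ cut ∘ flipTop 2 ∘ invCut ∘
      flipTop 2 ∘ invCut ∘ flipTop k ∘ cut ∘ flipTop k ∘ cut ∘ flipTop k := by
  funext c ⟨p, hp⟩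
  obtain rfl | rfl | rfl | h | h :=
    (by omega : p = 0 ∨ p = 1 ∨ p = 2 ∨ 3 ≤ p ∧ p < k + 2 ∨ k + 2 ≤ p)
  all_goals
    simp (disch := omega) only [Function.comp_apply, cut_apply_of_succ_lt, cut_apply_of_succ_eq,
      invCut_apply_of_pos, invCut_apply_of_eq_zero, flipTop_apply_of_lt, flipTop_apply_of_le,
      Bool.not_not]
    grind

theorem cut_iterate_apply (m : ℕ) (c : Deck N) (p : Fin N) :
    cut^[m] c p = c ⟨(p + m) % N, Nat.mod_lt _ (Nat.zero_lt_of_lt p.isLt)⟩ := by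
  induction m generalizing c with
  | zero => simp [Nat.mod_eq_of_lt p.isLt]
  | succ m ih =>
    simp only [Function.iterate_succ_apply, ih, cut, Nat.mod_add_mod, Nat.add_assoc]

theorem invCut_eq_cut_iterate : (invCut : Deck N → Deck N) = cut^[N - 1] := by
  funext c p
  simp only [cut_iterate_apply, invCut, Nat.add_sub_assoc (Nat.one_le_of_lt p.isLt)]

namespace Function.End

variable {α : Type*} {S : Submonoid (Function.End α)} {f g : α → α}

theorem comp_mem (hf : f ∈ S) (hg : g ∈ S) : f ∘ g ∈ S :=
  mul_mem hf hg

theorem iterate_mem (hf : f ∈ S) (n : ℕ) : f^[n] ∈ S :=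
  pow_mem (M := Function.End α) hf n

end Function.End

theorem flipTop_mem_of_even {S : Submonoid (Function.End (Deck N))} (hcut : cut ∈ S)
    (hflip : flipTop 2 ∈ S) {k : ℕ} (hk : Even k) (hkN : k ≤ N) : flipTop k ∈ S := by
  have hinv : invCut ∈ S := invCut_eq_cut_iterate (N := N) ▸ Function.End.iterate_mem hcut _
  obtain ⟨m, rfl⟩ := hk
  induction m with
  | zero => exact flipTop_zero (N := N) ▸ one_mem S
  | succ m ih =>
    rcases m.eq_zero_or_pos with rfl | hm
    · exact hflip
    have hflipk := ih (by omega)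
    rw [show m + 1 + (m + 1) = m + m + 2 by omega, flipTop_add_two (by omega) (by omega)]
    repeat' apply Function.End.comp_mem
    all_goals assumption

/-- On a deck of `2n` cards, the submonoid (under composition) generated by the cut `α`
and `β = δ₂` equals the submonoid generated by `α` together with all flips `δ_k` for even
`k` with `2 ≤ k ≤ 2n`: every finite composition of cuts and even flips is a finite
composition of `α` and `β`, and conversely. -/
theorem cato_monoid_generated_by_cut_and_beta (n : ℕ) (hn : 1 ≤ n) :
    Submonoid.closure ({cut, flipTop 2} : Set (Function.End (Deck (2 * n)))) =
      Submonoid.closure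
        (({cut} ∪ {f | ∃ k, Even k ∧ 2 ≤ k ∧ k ≤ 2 * n ∧ f = flipTop k} :
          Set (Function.End (Deck (2 * n))))) := by
  apply le_antisymm <;> rw [Submonoid.closure_le]
  · rintro f (rfl | rfl)
    · exact Submonoid.subset_closure (Or.inl rfl)
    · exact Submonoid.subset_closure (Or.inr ⟨2, even_two, le_rfl, by omega, rfl⟩)
  · rintro f (rfl | ⟨k, hk, -, hkN, rfl⟩)
    · exact Submonoid.subset_closure (Or.inl rfl)
    · exact flipTop_mem_of_even (Submonoid.subset_closure (Or.inl rfl))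
        (Submonoid.subset_closure (Or.inr rfl)) hk hkN
end

section
/- (Baby Hummer invariant) Consider configurations of a 4-card deck. If a configuration c has exactly one maloriented card (i.e., the cardinality of {p : Fin 4 | (c p).2 = true} is 1 or 3), then every configuration reachable from c by finitely many applications of the cut α and the flip β also has exactly one maloriented card. -/
/-!
The parity of the number of face-up cards is invariant. The cut only permutes positions; the
flip `δ_k` moves the top `k` cards by an involution of positions and turns each of them over,
so it changes that number by `k` modulo 2. Four cards with an odd number face-up have exactly
one maloriented card.
-/

open Finset

lemma Reachable.apply_eq {n : ℕ} {β : Type*} {X : Set (Deck n → Deck n)} {c c' : Deck n}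
    (I : Deck n → β) (hI : ∀ f ∈ X, ∀ d, I (f d) = I d) (h : Reachable X c c') :
    I c' = I c := by
  induction h with
  | refl => rfl
  | tail _ step ih =>
    obtain ⟨f, hf, rfl⟩ := step
    exact (hI f hf _).trans ih

lemma natCast_card_filter_univ {α R : Type*} [Fintype α] [AddCommMonoidWithOne R]
    (f : α → Bool) :
    ((univ.filter fun a => f a = true).card : R) = ∑ a, if f a = true then 1 else 0 := by
  simp only [card_filter, Nat.cast_sum, Nat.cast_ite, Nat.cast_one, Nat.cast_zero]

lemma ite_xor_eq_add_zmod_two (a b : Bool) :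
    (if (a ^^ b) = true then 1 else 0 : ZMod 2) =
      (if a = true then 1 else 0) + (if b = true then 1 else 0) := by
  cases a <;> cases b <;> decide

namespace Deck

variable {n : ℕ}

def faceUp (c : Deck n) : Finset (Fin n) := univ.filter fun p => (c p).2 = true

lemma card_faceUp_comp_perm (c : Deck n) (σ : Equiv.Perm (Fin n)) :
    #(faceUp (c ∘ σ)) = #(faceUp c) := by
  simp only [faceUp, card_filter, Function.comp_apply]
  exact Equiv.sum_comp σ fun p => if (c p).2 = true then 1 else 0

lemma cut_eq_comp_finRotate (c : Deck n) : cut c = c ∘ finRotate n := by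
  funext p
  cases n with
  | zero => exact p.elim0
  | succ m =>
    simp only [cut, Function.comp_apply, finRotate_apply]
    congr 1
    ext
    simp [Fin.val_add]

lemma card_faceUp_cut (c : Deck n) : #(faceUp (cut c)) = #(faceUp c) := by
  rw [cut_eq_comp_finRotate, card_faceUp_comp_perm]

/-- The position from which `flipTop k` moves a card to `p`. -/
def flipSource (k : ℕ) (hk : k ≤ n) (p : Fin n) : Fin n :=
  if p.val < k then ⟨k - 1 - p.val, by omega⟩ else p

lemma flipSource_involutive (k : ℕ) (hk : k ≤ n) : Function.Involutive (flipSource k hk) := by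
  intro p
  ext
  unfold flipSource
  split_ifs <;> simp_all <;> omega

lemma flipTop_snd (k : ℕ) (hk : k ≤ n) (c : Deck n) (p : Fin n) :
    (flipTop k c p).2 = (decide (p.val < k) ^^ (c (flipSource k hk p)).2) := by
  unfold flipTop flipSource
  by_cases hp : p.val < k <;> simp [hp, hk]

lemma card_faceUp_flipTop (k : ℕ) (hk : k ≤ n) (c : Deck n) :
    (#(faceUp (flipTop k c)) : ZMod 2) = k + #(faceUp c) := by
  simp only [faceUp, natCast_card_filter_univ, flipTop_snd k hk, ite_xor_eq_add_zmod_two,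
    sum_add_distrib]
  congr 1
  · rw [← natCast_card_filter_univ]
    simp only [decide_eq_true_eq, Fin.card_filter_val_lt, min_eq_right hk]
  · exact Equiv.sum_comp (flipSource_involutive k hk).toPerm fun p =>
      if (c p).2 = true then 1 else 0

lemma natCast_card_faceUp_eq_of_reachable {k : ℕ} (hk : Even k) (hkn : k ≤ n) {c c' : Deck n}
    (h : Reachable {cut, flipTop k} c c') : (#(faceUp c') : ZMod 2) = #(faceUp c) := by
  refine h.apply_eq (fun d => (#(faceUp d) : ZMod 2)) ?_
  rintro f (rfl | rfl) d
  · rw [card_faceUp_cut]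
  · rw [card_faceUp_flipTop k hkn, (ZMod.natCast_eq_zero_iff_even).2 hk, zero_add]

end Deck

open Deck

theorem baby_hummer_one_maloriented_invariant_general (c c' : Deck 4)
    (hone : (Finset.univ.filter fun p : Fin 4 => (c p).2 = true).card = 1 ∨
      (Finset.univ.filter fun p : Fin 4 => (c p).2 = true).card = 3)
    (hreach : Reachable ({cut, flipTop 2} : Set (Deck 4 → Deck 4)) c c') :
    (Finset.univ.filter fun p : Fin 4 => (c' p).2 = true).card = 1 ∨
      (Finset.univ.filter fun p : Fin 4 => (c' p).2 = true).card = 3 := by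
  change #(faceUp c) = 1 ∨ #(faceUp c) = 3 at hone
  change #(faceUp c') = 1 ∨ #(faceUp c') = 3
  have hodd : Odd #(faceUp c') := by
    rw [← ZMod.natCast_eq_one_iff_odd,
      natCast_card_faceUp_eq_of_reachable even_two (by norm_num) hreach,
      ZMod.natCast_eq_one_iff_odd]
    rcases hone with h | h <;> rw [h] <;> decide
  have hle : #(faceUp c') ≤ 4 := card_le_univ _
  obtain ⟨k, hk⟩ := hodd
  omega

/-- **Baby Hummer invariant.** If a configuration of a 4-card deck has exactly one
maloriented card (i.e. `|{p | (c p).2 = true}| ∈ {1, 3}`), then every configuration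
reachable from it by the cut `α` and the flip `β = δ₂` also has exactly one
maloriented card. -/
theorem baby_hummer_one_maloriented_invariant (c c' : Deck 4)
    (hc : Function.Bijective fun p => (c p).1)
    (hone : (Finset.univ.filter fun p : Fin 4 => (c p).2 = true).card = 1 ∨
      (Finset.univ.filter fun p : Fin 4 => (c p).2 = true).card = 3)
    (hreach : Reachable ({cut, flipTop 2} : Set (Deck 4 → Deck 4)) c c') :
    (Finset.univ.filter fun p : Fin 4 => (c' p).2 = true).card = 1 ∨
      (Finset.univ.filter fun p : Fin 4 => (c' p).2 = true).card = 3 :=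
  baby_hummer_one_maloriented_invariant_general c c' hone hreach
end

section
/- (Odd Hummer Principle) Let n be odd. For every configuration c of an n-card deck reachable from the all-face-down initial configuration c₀ by DATO shuffles, every face-up card sits at a position whose parity differs from that of its original position: for every position p with (c p).2 = true, p.val % 2 ≠ ((c p).1).val % 2. In particular, the face-up cards in even positions were originally in odd positions, and the face-up cards in odd positions were originally in even positions. -/
/-- The DATO shuffles on a deck of `n` cards: the flips `δ_k` for even `k` with
`0 < k ≤ n` together with the deals `γ_j` for even `j` with `0 < j ≤ n`. -/
def DATO (n : ℕ) : Set (Deck n → Deck n) :=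
  {f | ∃ k, Even k ∧ 0 < k ∧ k ≤ n ∧ f = flipTop k} ∪
    {f | ∃ j, Even j ∧ 0 < j ∧ j ≤ n ∧ f = deal j}

/-! The statement is the forward half of a stronger invariant: a card is face up exactly when
its position has changed parity. An even flip reverses a block of even length, so it turns
every card in the block over and moves it to a position of the other parity. With `j` even
and `n` odd, a deal moves the card at `p + j` or `n - 1 - p` to `p`, a position of the same
parity, without turning it over. -/

lemma Reachable.invariant {n : ℕ} {X : Set (Deck n → Deck n)} {P : Deck n → Prop}
    {c c' : Deck n} (h : Reachable X c c') (hc : P c) (hX : ∀ f ∈ X, ∀ d, P d → P (f d)) :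
    P c' := by
  induction h with
  | refl => exact hc
  | tail _ hstep ih =>
    obtain ⟨f, hf, rfl⟩ := hstep
    exact hX f hf _ ih

def FaceUpIffParityChanged {n : ℕ} (c : Deck n) : Prop :=
  ∀ p : Fin n, (c p).2 = true ↔ p.val % 2 ≠ ((c p).1).val % 2

namespace FaceUpIffParityChanged

variable {n : ℕ} {c : Deck n}

lemma initial : FaceUpIffParityChanged (initial (n := n)) := fun p => by
  simp [_root_.initial]

lemma moved (h : FaceUpIffParityChanged c) {p q : Fin n} (hpq : p.val % 2 = q.val % 2) :
    (c q).2 = true ↔ p.val % 2 ≠ ((c q).1).val % 2 :=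
  hpq ▸ h q

lemma moved_flipped (h : FaceUpIffParityChanged c) {p q : Fin n}
    (hpq : p.val % 2 ≠ q.val % 2) :
    (!(c q).2) = true ↔ p.val % 2 ≠ ((c q).1).val % 2 := by
  rw [Bool.not_eq_true', ← Bool.not_eq_true, h q]
  omega

lemma flipTop (h : FaceUpIffParityChanged c) {k : ℕ} (hk : Even k) :
    FaceUpIffParityChanged (flipTop k c) := by
  intro p
  unfold _root_.flipTop
  split_ifs with hp
  · exact h.moved_flipped (by simp only; have := Nat.even_iff.mp hk; omega)
  · exact h p

lemma deal (h : FaceUpIffParityChanged c) (hn : Odd n) {j : ℕ} (hj : Even j) :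
    FaceUpIffParityChanged (deal j c) := by
  intro p
  have := Nat.odd_iff.mp hn
  have := Nat.even_iff.mp hj
  have := p.isLt
  unfold _root_.deal
  split_ifs <;> exact h.moved (by simp only; omega)

end FaceUpIffParityChanged

/-- **Odd Hummer Principle.** For a deck with an odd number `n` of cards, all initially
face down, after any number of DATO shuffles every face-up card sits at a position whose
parity differs from that of its original position. -/
theorem odd_hummer_principle (n : ℕ) (hn : Odd n) (c : Deck n)
    (hreach : Reachable (DATO n) initial c) :
    ∀ p : Fin n, (c p).2 = true → p.val % 2 ≠ ((c p).1).val % 2 := by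
  have hinv : FaceUpIffParityChanged c := by
    refine hreach.invariant FaceUpIffParityChanged.initial ?_
    rintro f (⟨k, hk, -, -, rfl⟩ | ⟨j, hj, -, -, rfl⟩) d hd
    exacts [hd.flipTop hk, hd.deal hn hj]
  exact fun p => (hinv p).mp
end

section
/- (Three-attribute regularity, odd case) Let n be odd and color the card originally at position q red if q is even and black if q is odd (so the deck starts with colors alternating). For every configuration c reachable from the all-face-down initial configuration c₀ by DATO shuffles, and for every position p: the card at p is red if and only if (p is even ↔ the card at p is face-down); formally, ((c p).1).val % 2 = 0 ↔ (p.val % 2 = 0 ↔ (c p).2 = false). Hence any two of the three attributes (color, orientation, parity of position) determine the third. -/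
def Deck.IsRegular {n : ℕ} (c : Deck n) : Prop :=
  ∀ p : Fin n, (((c p).1).val % 2 = 0 ↔ (p.val % 2 = 0 ↔ (c p).2 = false))

lemma Reachable.induction {n : ℕ} {X : Set (Deck n → Deck n)} {P : Deck n → Prop}
    {c c' : Deck n} (hX : ∀ f ∈ X, ∀ d, P d → P (f d)) (hc : P c)
    (h : Reachable X c c') : P c' := by
  induction h with
  | refl => exact hc
  | tail _ hstep ih =>
    obtain ⟨f, hf, rfl⟩ := hstep
    exact hX f hf _ ih

lemma Deck.isRegular_initial {n : ℕ} : (initial : Deck n).IsRegular := fun p => by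
  simp [initial]

namespace Deck.IsRegular

variable {n : ℕ} {c : Deck n}

/-- Flipping an even block reverses it, so each card changes the parity of its position,
and it also changes orientation. -/
lemma flipTop {k : ℕ} (hk : Even k) (hc : IsRegular c) : IsRegular (flipTop k c) := by
  intro p
  by_cases h : p.val < k ∧ k ≤ n
  · simp only [_root_.flipTop, dif_pos h]
    have hparity : (k - 1 - p.val) % 2 = 0 ↔ ¬ p.val % 2 = 0 := by
      obtain ⟨r, rfl⟩ := hk; omega
    rw [hc, hparity]
    cases (c ⟨k - 1 - p.val, by omega⟩).2 <;> simp
  · simp only [_root_.flipTop, dif_neg h]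
    exact hc p

/-- A deal moves each card by an even distance or sends position `q` to `n - 1 - q`,
which has the same parity when `n` is odd; no card is turned over. -/
lemma deal (hn : Odd n) {j : ℕ} (hj : Even j) (hc : IsRegular c) :
    IsRegular (deal j c) := by
  intro p
  obtain ⟨m, rfl⟩ := hn
  obtain ⟨r, rfl⟩ := hj
  have hp := p.isLt
  by_cases h : p.val < 2 * m + 1 - (r + r)
  · simp only [_root_.deal, dif_pos h]
    have hparity : (p.val + (r + r)) % 2 = p.val % 2 := by omega
    rw [hc, hparity]
  · simp only [_root_.deal, dif_neg h]
    have hparity : (2 * m + 1 - 1 - p.val) % 2 = p.val % 2 := by omega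
    rw [hc, hparity]

lemma apply_of_mem_DATO (hn : Odd n) {f : Deck n → Deck n} (hf : f ∈ DATO n)
    (hc : IsRegular c) : IsRegular (f c) := by
  rcases hf with ⟨k, hk, -, -, rfl⟩ | ⟨j, hj, -, -, rfl⟩
  · exact hc.flipTop hk
  · exact hc.deal hn hj

end Deck.IsRegular

/-- **Three-attribute regularity, odd case.** Color the card originally at position `q`
red iff `q` is even, so the deck starts alternating. For an odd-size deck, all cards
initially face down, after any number of DATO shuffles the card at position `p` is red
iff (`p` is even ↔ the card at `p` is face-down). Hence any two of the three attributes
(color, orientation, parity of position) determine the third. -/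
theorem three_attribute_regularity_odd (n : ℕ) (hn : Odd n) (c : Deck n)
    (hreach : Reachable (DATO n) initial c) :
    ∀ p : Fin n, (((c p).1).val % 2 = 0 ↔ (p.val % 2 = 0 ↔ (c p).2 = false)) :=
  hreach.induction (fun _ hf _ hd => hd.apply_of_mem_DATO hn hf) Deck.isRegular_initial
end

section
/- (Three-attribute regularity, even case) Let the deck have 2n cards (n ≥ 1) and color the card originally at position q red if q is even and black if q is odd (so the deck starts with colors alternating). For every configuration c reachable from the all-face-down initial configuration c₀ by CATO shuffles, there exists a Boolean b such that for every position p: ((c p).1 is even) ↔ ((p is even) XOR (c p).2 XOR b); equivalently, the Boolean value (isRed of the card at p) XOR (p.val % 2 = 0) XOR (c p).2 is the same at every position p. Hence, for a card whose attributes are known before the shuffles, any two of the three attributes (color, orientation, parity of position) determine the third. -/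
def IsThreeAttributeRegular {m : ℕ} (c : Deck m) (b : Bool) : Prop :=
  ∀ p : Fin m, (((c p).1).val % 2 = 0 ↔ xor (xor (decide (p.val % 2 = 0)) (c p).2) b = true)

theorem isThreeAttributeRegular_initial {m : ℕ} :
    IsThreeAttributeRegular (initial : Deck m) false := by
  simp [IsThreeAttributeRegular, initial]

theorem IsThreeAttributeRegular.apply_of_parity_swap {m : ℕ} {c c' : Deck m} {b : Bool}
    (h : IsThreeAttributeRegular c b) (e : Bool) (p p' : Fin m) (hcard : (c' p).1 = (c p').1)
    (hface : (c' p).2 = xor (c p').2 e) (hpar : p'.val % 2 = 0 ↔ ¬ p.val % 2 = 0) :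
    (((c' p).1).val % 2 = 0 ↔ xor (xor (decide (p.val % 2 = 0)) (c' p).2) (xor b !e) = true) := by
  have hdec : decide (p'.val % 2 = 0) = !decide (p.val % 2 = 0) := by
    simp only [hpar, decide_not]
  rw [hcard, hface, h p', hdec]
  cases decide (p.val % 2 = 0) <;> cases (c p').2 <;> cases b <;> cases e <;> decide

theorem IsThreeAttributeRegular.cut {m : ℕ} (hm : Even m) {c : Deck m} {b : Bool}
    (h : IsThreeAttributeRegular c b) : IsThreeAttributeRegular (_root_.cut c) (!b) := by
  intro p
  have hpar : (p.val + 1) % m % 2 = 0 ↔ ¬ p.val % 2 = 0 := by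
    rw [Nat.mod_mod_of_dvd _ (even_iff_two_dvd.mp hm)]
    omega
  simpa using h.apply_of_parity_swap (c' := _root_.cut c) false p _ rfl
    (Bool.xor_false _).symm hpar

theorem IsThreeAttributeRegular.flipTop {m k : ℕ} (hk : Even k) {c : Deck m} {b : Bool}
    (h : IsThreeAttributeRegular c b) : IsThreeAttributeRegular (_root_.flipTop k c) b := by
  intro p
  by_cases hp : p.val < k ∧ k ≤ m
  · have hpar : (k - 1 - p.val) % 2 = 0 ↔ ¬ p.val % 2 = 0 := by
      obtain ⟨j, rfl⟩ := hk
      omega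
    simpa using h.apply_of_parity_swap (c' := _root_.flipTop k c) true p ⟨k - 1 - p.val, by omega⟩
      (by simp [_root_.flipTop, hp]) (by simp [_root_.flipTop, hp]) hpar
  · simpa [_root_.flipTop, hp] using h p

theorem IsThreeAttributeRegular.exists_of_mem_CATO {n : ℕ} {c : Deck (2 * n)} {b : Bool}
    (h : IsThreeAttributeRegular c b) {f : Deck (2 * n) → Deck (2 * n)} (hf : f ∈ CATO n) :
    ∃ b', IsThreeAttributeRegular (f c) b' := by
  rcases hf with rfl | ⟨k, hk, -, -, rfl⟩
  · exact ⟨!b, h.cut (even_two_mul n)⟩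
  · exact ⟨b, h.flipTop hk⟩

theorem three_attribute_regularity_even_general (n : ℕ) (c : Deck (2 * n))
    (hreach : Reachable (CATO n) initial c) :
    ∃ b : Bool, ∀ p : Fin (2 * n),
      (((c p).1).val % 2 = 0 ↔ xor (xor (decide (p.val % 2 = 0)) (c p).2) b = true) := by
  induction hreach with
  | refl => exact ⟨false, isThreeAttributeRegular_initial⟩
  | tail _ hstep ih =>
    obtain ⟨b, hb⟩ := ih
    obtain ⟨f, hf, rfl⟩ := hstep
    exact IsThreeAttributeRegular.exists_of_mem_CATO hb hf

/-- **Three-attribute regularity, even case.** Color the card originally at position `q`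
red iff `q` is even, so the `2n`-card deck starts alternating. All cards initially face
down, after any number of CATO shuffles there is a Boolean `b` such that at every
position `p`, (the card at `p` is red) ↔ ((`p` is even) XOR (`c p` is face-up) XOR `b`).
Hence any two of the three attributes (color, orientation, parity of position) determine
the third. -/
theorem three_attribute_regularity_even (n : ℕ) (hn : 1 ≤ n) (c : Deck (2 * n))
    (hreach : Reachable (CATO n) initial c) :
    ∃ b : Bool, ∀ p : Fin (2 * n),
      (((c p).1).val % 2 = 0 ↔ xor (xor (decide (p.val % 2 = 0)) (c p).2) b = true) :=
  three_attribute_regularity_even_general n c hreach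
end

section
/- (Odd-flip color regularity, even deck) Let the deck have 2n cards (n ≥ 1) and color the card originally at position q red if q is even and black if q is odd (so the deck starts with colors alternating). For every configuration c reachable from the all-face-down initial configuration c₀ by finitely many applications of the cut α and flips τ_m with m odd, there exists a Boolean b such that for every position p: ((c p).1 is even) ↔ ((p is even) ↔ b = true). In particular, all cards in even positions have one color and all cards in odd positions have the other color. -/
/-!
Colour the card originally at `q` by the parity of `q`. The property "colour and parity of
position agree everywhere, or disagree everywhere" holds initially and survives every move:
on a deck of even size a cut shifts every position by one modulo an even number, which swaps
the two cases, and an odd flip `τ_m` moves the card at `p < m` to `m - 1 - p`, which has the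
same parity as `p`.
-/

def ColorAlternating {N : ℕ} (c : Deck N) : Prop :=
  ∃ b : Bool, ∀ p : Fin N, ((c p).1.val % 2 = 0 ↔ (p.val % 2 = 0 ↔ b = true))

theorem Reachable.of_invariant {N : ℕ} {X : Set (Deck N → Deck N)} {P : Deck N → Prop}
    {c c' : Deck N} (h : Reachable X c c') (hc : P c) (hX : ∀ f ∈ X, ∀ d, P d → P (f d)) :
    P c' := by
  induction h with
  | refl => exact hc
  | tail _ hstep ih =>
    obtain ⟨f, hf, rfl⟩ := hstep
    exact hX f hf _ ih

theorem colorAlternating_initial {N : ℕ} : ColorAlternating (initial : Deck N) :=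
  ⟨true, fun p => by simp [initial]⟩

theorem ColorAlternating.cut {N : ℕ} (hN : Even N) {c : Deck N} (hc : ColorAlternating c) :
    ColorAlternating (cut c) := by
  obtain ⟨b, hb⟩ := hc
  refine ⟨!b, fun p => ?_⟩
  have hpos : (p.val + 1) % N % 2 = (p.val + 1) % 2 :=
    Nat.mod_mod_of_dvd _ (even_iff_two_dvd.mp hN)
  simp only [_root_.cut, hb, hpos]
  cases b <;> simp <;> omega

theorem ColorAlternating.flipTop {N m : ℕ} (hm : Odd m) {c : Deck N} (hc : ColorAlternating c) :
    ColorAlternating (flipTop m c) := by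
  obtain ⟨b, hb⟩ := hc
  refine ⟨b, fun p => ?_⟩
  simp only [_root_.flipTop]
  split
  · next h =>
    have hpos : (m - 1 - p.val) % 2 = p.val % 2 := by
      have := Nat.odd_iff.mp hm
      omega
    rw [hb]
    simp only [hpos]
  · exact hb p

theorem odd_flip_color_regularity_even_deck_general (n : ℕ) (c : Deck (2 * n))
    (hreach : Reachable
      (({cut} ∪ {f | ∃ m, Odd m ∧ 0 < m ∧ m ≤ 2 * n ∧ f = flipTop m} :
        Set (Deck (2 * n) → Deck (2 * n)))) initial c) :
    ∃ b : Bool, ∀ p : Fin (2 * n),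
      (((c p).1).val % 2 = 0 ↔ (p.val % 2 = 0 ↔ b = true)) := by
  refine hreach.of_invariant (P := ColorAlternating) colorAlternating_initial ?_
  rintro f (rfl | ⟨m, hm, -, -, rfl⟩) d hd
  · exact hd.cut (even_two_mul n)
  · exact hd.flipTop hm

/-- **Odd-flip color regularity, even deck.** Color the card originally at position `q`
red iff `q` is even, so the `2n`-card deck starts alternating. All cards initially face
down, after any number of cuts `α` and odd flips `τ_m` there is a Boolean `b` such that
at every position `p`, (the card at `p` is red) ↔ ((`p` is even) ↔ `b = true`).
In particular all cards in even positions have one color and all cards in odd positions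
have the other. -/
theorem odd_flip_color_regularity_even_deck (n : ℕ) (hn : 1 ≤ n) (c : Deck (2 * n))
    (hreach : Reachable
      (({cut} ∪ {f | ∃ m, Odd m ∧ 0 < m ∧ m ≤ 2 * n ∧ f = flipTop m} :
        Set (Deck (2 * n) → Deck (2 * n)))) initial c) :
    ∃ b : Bool, ∀ p : Fin (2 * n),
      (((c p).1).val % 2 = 0 ↔ (p.val % 2 = 0 ↔ b = true)) :=
  odd_flip_color_regularity_even_deck_general n c hreach
end

section
/- (Odd-flip color regularity, odd deck) Let n be odd and color the card originally at position q red if q is even and black if q is odd (so the deck starts with colors alternating). For every configuration c reachable from the all-face-down initial configuration c₀ by finitely many applications of flips τ_m with m odd and deals γ_j with j even, and for every position p: ((c p).1 is even) ↔ (p is even). In particular, all cards in even positions have one color and all cards in odd positions have the other color. -/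
/-!
Give the card originally at position `q` the parity of `q`. Initially every card's parity
matches that of its position, and both kinds of move preserve this. An odd flip `τ_m` sends
position `p < m` to `m - 1 - p`, and `m - 1` is even; an even deal `γ_j` sends `p` either to
`p + j` or to `n - 1 - p`, and both `j` and `n - 1` are even.
-/

def ParityAligned {n : ℕ} (c : Deck n) : Prop :=
  ∀ p : Fin n, (c p).1.val % 2 = p.val % 2

theorem parityAligned_initial (n : ℕ) : ParityAligned (initial : Deck n) :=
  fun _ => rfl

namespace ParityAligned

variable {n : ℕ} {c : Deck n}

theorem flipTop {m : ℕ} (hm : Odd m) (hc : ParityAligned c) :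
    ParityAligned (_root_.flipTop m c) := by
  intro p
  unfold _root_.flipTop
  split
  · obtain ⟨t, rfl⟩ := hm
    rw [hc]
    simp only
    omega
  · exact hc p

theorem deal (hn : Odd n) {j : ℕ} (hj : Even j) (hc : ParityAligned c) :
    ParityAligned (_root_.deal j c) := by
  intro p
  unfold _root_.deal
  split
  · obtain ⟨t, rfl⟩ := hj
    rw [hc]
    simp only
    omega
  · obtain ⟨t, rfl⟩ := hn
    have := p.isLt
    rw [hc]
    simp only
    omega

end ParityAligned

/-- **Odd-flip color regularity, odd deck.** Color the card originally at position `q`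
red iff `q` is even, so the odd-size deck starts alternating. All cards initially face
down, after any number of odd flips `τ_m` and even deals `γ_j`, at every position `p`
the card at `p` is red iff `p` is even. In particular all cards in even positions have
one color and all cards in odd positions have the other. -/
theorem odd_flip_color_regularity_odd_deck (n : ℕ) (hn : Odd n) (c : Deck n)
    (hreach : Reachable
      (({f | ∃ m, Odd m ∧ 0 < m ∧ m ≤ n ∧ f = flipTop m} ∪
        {f | ∃ j, Even j ∧ 0 < j ∧ j ≤ n ∧ f = deal j} :
        Set (Deck n → Deck n))) initial c) :
    ∀ p : Fin n, (((c p).1).val % 2 = 0 ↔ p.val % 2 = 0) := by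
  have aligned : ParityAligned c := by
    induction hreach with
    | refl => exact parityAligned_initial n
    | tail _ hstep ih =>
      obtain ⟨f, hf, rfl⟩ := hstep
      rcases hf with ⟨m, hm, -, -, rfl⟩ | ⟨j, hj, -, -, rfl⟩
      · exact ih.flipTop hm
      · exact ih.deal hn hj
  intro p
  rw [aligned p]
end
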